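/- arXiv:2507.16236 — 5 statements merged into one kernel-verified Lean document; each statement's English description precedes it below -/
import Mathlib

section
/- Let X ~ Bin(n, 1/B) with B ≥ 1. Then E[1/√X · 1{X ≥ 1}] ≤ B/√n, where the expectation is Σ_{k=1}^{n} (1/√k) C(n,k) B^{−k}(1−1/B)^{n−k}. -/
/-- For `X ~ Bin(n, 1/B)` with `B ≥ 1`,
`E[X^{-1/2} 1{X ≥ 1}] = ∑_{k=1}^n (1/√k) C(n,k) B^{-k} (1-1/B)^{n-k} ≤ B/√n`. -/
theorem stmt_4 (n : ℕ) (hn : 1 ≤ n) (B : ℝ) (hB : 1 ≤ B) :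
    ∑ k ∈ Finset.Icc 1 n,
        (1 / Real.sqrt k) * (n.choose k : ℝ) * (1 / B) ^ k * (1 - 1 / B) ^ (n - k)
      ≤ B / Real.sqrt n := by
  have hB0 : (0:ℝ) < B := lt_of_lt_of_le one_pos hB
  have hp0 : (0:ℝ) ≤ 1 / B := by positivity
  have hq0 : (0:ℝ) ≤ 1 - 1 / B := by
    have : 1 / B ≤ 1 := by rw [div_le_one hB0]; exact hB
    linarith
  have hsn : (0:ℝ) < Real.sqrt n := Real.sqrt_pos.2 (by exact_mod_cast hn)
  have step1 : ∑ k ∈ Finset.Icc 1 n,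
        (1 / Real.sqrt k) * (n.choose k : ℝ) * (1 / B) ^ k * (1 - 1 / B) ^ (n - k)
      ≤ (B / Real.sqrt n) * ∑ k ∈ Finset.Icc 1 n,
        ((n+1).choose (k+1) : ℝ) * (1 / B) ^ (k+1) * (1 - 1 / B) ^ (n - k) := by
    rw [Finset.mul_sum]
    apply Finset.sum_le_sum
    intro k hk
    obtain ⟨hk1, hkn⟩ := Finset.mem_Icc.mp hk
    have hsk : (0:ℝ) < Real.sqrt k := Real.sqrt_pos.2 (by exact_mod_cast hk1)
    have hk1' : (1:ℝ) ≤ (k:ℝ) := by exact_mod_cast hk1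
    have hkn' : (k:ℝ) ≤ (n:ℝ) := by exact_mod_cast hkn
    have hchoose : ((n+1).choose (k+1) : ℝ) * ((k:ℝ)+1) = ((n:ℝ)+1) * (n.choose k : ℝ) := by
      have h : ((n+1) * n.choose k : ℕ) = ((n+1).choose (k+1) * (k+1) : ℕ) :=
        Nat.add_one_mul_choose_eq n k
      have h' : (((n+1) * n.choose k : ℕ) : ℝ) = (((n+1).choose (k+1) * (k+1) : ℕ) : ℝ) := by
        exact_mod_cast congrArg (Nat.cast : ℕ → ℝ) h
      push_cast at h'
      linarith
    have hsqrt : Real.sqrt n * ((k:ℝ)+1) ≤ Real.sqrt k * ((n:ℝ)+1) := by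
      have h1 : Real.sqrt n * ((k:ℝ)+1) = Real.sqrt ((n:ℝ) * ((k:ℝ)+1)^2) := by
        rw [Real.sqrt_mul (by positivity), Real.sqrt_sq (by positivity)]
      have h2 : Real.sqrt k * ((n:ℝ)+1) = Real.sqrt ((k:ℝ) * ((n:ℝ)+1)^2) := by
        rw [Real.sqrt_mul (by positivity), Real.sqrt_sq (by positivity)]
      rw [h1, h2]
      apply Real.sqrt_le_sqrt
      nlinarith [mul_nonneg (sub_nonneg.2 hkn') (sub_nonneg.2 (show (1:ℝ) ≤ (k:ℝ)*(n:ℝ) by nlinarith))]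
    have hC : (0:ℝ) ≤ (n.choose k : ℝ) := Nat.cast_nonneg _
    have key : (1 / Real.sqrt k) * (n.choose k : ℝ)
        ≤ (1 / Real.sqrt n) * ((n+1).choose (k+1) : ℝ) := by
      rw [one_div_mul_eq_div, one_div_mul_eq_div, div_le_div_iff₀ hsk hsn]
      have h3 : (n.choose k : ℝ) * Real.sqrt n * ((k:ℝ)+1)
          ≤ ((n+1).choose (k+1) : ℝ) * Real.sqrt k * ((k:ℝ)+1) := by
        have h4 : (n.choose k : ℝ) * (Real.sqrt n * ((k:ℝ)+1))
            ≤ (n.choose k : ℝ) * (Real.sqrt k * ((n:ℝ)+1)) :=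
          mul_le_mul_of_nonneg_left hsqrt hC
        calc (n.choose k : ℝ) * Real.sqrt n * ((k:ℝ)+1)
            = (n.choose k : ℝ) * (Real.sqrt n * ((k:ℝ)+1)) := by ring
          _ ≤ (n.choose k : ℝ) * (Real.sqrt k * ((n:ℝ)+1)) := h4
          _ = Real.sqrt k * (((n:ℝ)+1) * (n.choose k : ℝ)) := by ring
          _ = Real.sqrt k * (((n+1).choose (k+1) : ℝ) * ((k:ℝ)+1)) := by rw [hchoose]
          _ = ((n+1).choose (k+1) : ℝ) * Real.sqrt k * ((k:ℝ)+1) := by ring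
      exact le_of_mul_le_mul_right h3 (by positivity)
    have hrhs : (B / Real.sqrt n) * (((n+1).choose (k+1) : ℝ) * (1/B)^(k+1) * (1-1/B)^(n-k))
        = (1 / Real.sqrt n) * ((n+1).choose (k+1) : ℝ) * (1/B)^k * (1-1/B)^(n-k) := by
      rw [pow_succ]
      field_simp
    rw [hrhs]
    calc (1 / Real.sqrt k) * (n.choose k : ℝ) * (1/B)^k * (1-1/B)^(n-k)
        ≤ (1 / Real.sqrt n) * ((n+1).choose (k+1) : ℝ) * (1/B)^k * (1-1/B)^(n-k) := by
          apply mul_le_mul_of_nonneg_right _ (pow_nonneg hq0 _)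
          exact mul_le_mul_of_nonneg_right key (pow_nonneg hp0 _)
      _ = (1 / Real.sqrt n) * ((n+1).choose (k+1) : ℝ) * (1/B)^k * (1-1/B)^(n-k) := rfl
  have step2 : ∑ k ∈ Finset.Icc 1 n,
        ((n+1).choose (k+1) : ℝ) * (1 / B) ^ (k+1) * (1 - 1 / B) ^ (n - k) ≤ 1 := by
    have hre : ∑ k ∈ Finset.Icc 1 n,
          ((n+1).choose (k+1) : ℝ) * (1 / B) ^ (k+1) * (1 - 1 / B) ^ (n - k)
        = ∑ j ∈ Finset.Icc 2 (n+1),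
          ((n+1).choose j : ℝ) * (1 / B) ^ j * (1 - 1 / B) ^ (n + 1 - j) := by
      rw [show Finset.Icc 2 (n+1) = (Finset.Icc 1 n).map (addRightEmbedding 1) from
        (Finset.map_add_right_Icc 1 n 1).symm, Finset.sum_map]
      apply Finset.sum_congr rfl
      intro k _
      simp only [addRightEmbedding_apply]
      rw [show n + 1 - (k + 1) = n - k from by omega]
    rw [hre]
    have hbin : ∑ j ∈ Finset.range (n+2),
        ((n+1).choose j : ℝ) * (1 / B) ^ j * (1 - 1 / B) ^ (n + 1 - j) = 1 := by
      have h := add_pow (1/B) (1 - 1/B) (n+1)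
      have hpq : (1/B) + (1 - 1/B) = (1:ℝ) := by ring
      rw [hpq, one_pow] at h
      have h2 : ∑ j ∈ Finset.range (n+2),
          ((n+1).choose j : ℝ) * (1 / B) ^ j * (1 - 1 / B) ^ (n + 1 - j)
          = ∑ m ∈ Finset.range (n+1+1),
            (1/B)^m * (1-1/B)^(n+1-m) * ((n+1).choose m : ℝ) :=
        Finset.sum_congr rfl (fun j _ => by ring)
      rw [h2, ← h]
    calc ∑ j ∈ Finset.Icc 2 (n+1), ((n+1).choose j : ℝ) * (1 / B) ^ j * (1 - 1 / B) ^ (n + 1 - j)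
        ≤ ∑ j ∈ Finset.range (n+2), ((n+1).choose j : ℝ) * (1 / B) ^ j * (1 - 1 / B) ^ (n + 1 - j) := ?_
      _ = 1 := hbin
    apply Finset.sum_le_sum_of_subset_of_nonneg
    · intro j hj
      simp only [Finset.mem_Icc] at hj
      simp only [Finset.mem_range]
      omega
    · intro j _ _
      positivity
  calc ∑ k ∈ Finset.Icc 1 n,
        (1 / Real.sqrt k) * (n.choose k : ℝ) * (1 / B) ^ k * (1 - 1 / B) ^ (n - k)
      ≤ (B / Real.sqrt n) * ∑ k ∈ Finset.Icc 1 n,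
        ((n+1).choose (k+1) : ℝ) * (1 / B) ^ (k+1) * (1 - 1 / B) ^ (n - k) := step1
    _ ≤ (B / Real.sqrt n) * 1 := by
        apply mul_le_mul_of_nonneg_left step2 (by positivity)
    _ = B / Real.sqrt n := mul_one _
end

section
/- Let ε ∈ (0,1), δ ∈ (0,1), m ≥ 1 an integer, and let k = k(m,ε,δ) = max{j ∈ {−1,…,m−1} : F_{Bin(m,ε)}(j) ≤ δ} with k ≥ 0. Then F_{Bin(m,ε)}(k+1) − F_{Bin(m,ε)}(k−1) ≤ 7/(√(ε(1−ε))·√m). -/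
open Real Finset Nat

/-- The binomial probability mass function. -/
noncomputable def binPMF (m : ℕ) (p : ℝ) (i : ℕ) : ℝ :=
  (m.choose i : ℝ) * p ^ i * (1 - p) ^ (m - i)

lemma binPMF_nonneg (m : ℕ) (p : ℝ) (hp : 0 ≤ p) (hq : p ≤ 1) (i : ℕ) :
    0 ≤ binPMF m p i := by
  unfold binPMF
  have : (0:ℝ) ≤ 1 - p := by linarith
  positivity

lemma binPMF_sum (m : ℕ) (p : ℝ) :
    ∑ i ∈ Finset.range (m + 1), binPMF m p i = 1 := by
  have h := add_pow p (1 - p) m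
  simp only [add_sub_cancel, one_pow] at h
  rw [h]
  exact Finset.sum_congr rfl fun i _ => by unfold binPMF; ring

/-- Binomial CDF on integer arguments, with the convention `F(k) = 0` for `k < 0`. -/
noncomputable def binCDFZ (m : ℕ) (p : ℝ) (k : ℤ) : ℝ :=
  if k < 0 then 0
  else ∑ i ∈ Finset.range (k.toNat + 1), (m.choose i : ℝ) * p ^ i * (1 - p) ^ (m - i)

lemma binCDFZ_diff (m : ℕ) (p : ℝ) (k : ℤ) (hk : 0 ≤ k) :
    binCDFZ m p (k + 1) - binCDFZ m p (k - 1)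
      = binPMF m p k.toNat + binPMF m p (k.toNat + 1) := by
  have h1 : binCDFZ m p (k + 1) = ∑ i ∈ Finset.range (k.toNat + 2), binPMF m p i := by
    unfold binCDFZ
    rw [if_neg (by omega)]
    have : (k + 1).toNat + 1 = k.toNat + 2 := by omega
    rw [this]; rfl
  have h2 : binCDFZ m p (k - 1) = ∑ i ∈ Finset.range k.toNat, binPMF m p i := by
    unfold binCDFZ
    rcases lt_or_ge (k - 1) 0 with h | h
    · rw [if_pos h]
      have : k.toNat = 0 := by omega
      rw [this]; simp
    · rw [if_neg (by omega)]
      have : (k - 1).toNat + 1 = k.toNat := by omega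
      rw [this]; rfl
  rw [h1, h2, Finset.sum_range_succ, Finset.sum_range_succ]
  ring

lemma sqrtpi_le_stirlingSeq (n : ℕ) (hn : 1 ≤ n) : Real.sqrt π ≤ Stirling.stirlingSeq n := by
  have ht : Filter.Tendsto (Stirling.stirlingSeq ∘ Nat.succ) Filter.atTop (nhds (Real.sqrt π)) :=
    Stirling.tendsto_stirlingSeq_sqrt_pi.comp (Filter.tendsto_add_atTop_nat 1)
  have := Stirling.stirlingSeq'_antitone.le_of_tendsto ht (n - 1)
  simpa [Nat.succ_eq_add_one, Nat.sub_add_cancel hn] using this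

lemma stirlingSeq_le (n : ℕ) (hn : 1 ≤ n) : Stirling.stirlingSeq n ≤ Real.exp 1 / Real.sqrt 2 := by
  have := Stirling.stirlingSeq'_antitone (Nat.zero_le (n - 1))
  simp only [Function.comp_apply, Nat.succ_eq_add_one, Nat.sub_add_cancel hn, Nat.zero_add] at this
  calc Stirling.stirlingSeq n ≤ Stirling.stirlingSeq 1 := this
    _ = Real.exp 1 / Real.sqrt 2 := Stirling.stirlingSeq_one

lemma fact_lb (n : ℕ) (hn : 1 ≤ n) :
    2 * Real.sqrt n * (n / Real.exp 1) ^ n ≤ (n ! : ℝ) := by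
  have hpos : (0:ℝ) < Real.sqrt (2 * n) * (n / Real.exp 1) ^ n := by
    have : (0:ℝ) < n := by exact_mod_cast hn
    positivity
  have h := sqrtpi_le_stirlingSeq n hn
  unfold Stirling.stirlingSeq at h
  rw [le_div_iff₀ hpos] at h
  calc 2 * Real.sqrt n * (n / Real.exp 1) ^ n
      ≤ Real.sqrt π * (Real.sqrt (2 * n) * (n / Real.exp 1) ^ n) := by
        rw [show (2:ℝ) * (n:ℝ) = 2 * n by norm_num, Real.sqrt_mul (by norm_num : (0:ℝ) ≤ 2)]
        have h2 : (2:ℝ) ≤ Real.sqrt π * Real.sqrt 2 := by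
          rw [← Real.sqrt_mul pi_nonneg]
          have h4 : (4:ℝ) ≤ π * 2 := by nlinarith [Real.pi_gt_three]
          calc (2:ℝ) = Real.sqrt 4 := by
                rw [show (4:ℝ) = 2^2 by norm_num, Real.sqrt_sq (by norm_num : (0:ℝ) ≤ 2)]
            _ ≤ Real.sqrt (π * 2) := Real.sqrt_le_sqrt h4
        have hP : (0:ℝ) ≤ Real.sqrt n * (n / Real.exp 1) ^ n := by positivity
        nlinarith [h2, hP]
    _ ≤ (n ! : ℝ) := h

lemma fact_ub (n : ℕ) (hn : 1 ≤ n) :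
    (n ! : ℝ) ≤ 3 * Real.sqrt n * (n / Real.exp 1) ^ n := by
  have hpos : (0:ℝ) < Real.sqrt (2 * n) * (n / Real.exp 1) ^ n := by
    have : (0:ℝ) < n := by exact_mod_cast hn
    positivity
  have h := stirlingSeq_le n hn
  unfold Stirling.stirlingSeq at h
  rw [div_le_iff₀ hpos] at h
  calc (n ! : ℝ) ≤ Real.exp 1 / Real.sqrt 2 * (Real.sqrt (2 * n) * (n / Real.exp 1) ^ n) := h
    _ ≤ 3 * Real.sqrt n * (n / Real.exp 1) ^ n := by
        rw [show (2:ℝ) * (n:ℝ) = 2 * n by norm_num, Real.sqrt_mul (by norm_num : (0:ℝ) ≤ 2)]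
        have he : Real.exp 1 ≤ 3 := by
          nlinarith [Real.exp_one_lt_d9]
        have hP : (0:ℝ) ≤ Real.sqrt n * (n / Real.exp 1) ^ n := by positivity
        have hrw : Real.exp 1 / Real.sqrt 2 * (Real.sqrt 2 * Real.sqrt n * (n / Real.exp 1) ^ n)
            = Real.exp 1 * (Real.sqrt n * (n / Real.exp 1) ^ n) := by
          have hs : Real.sqrt 2 ≠ 0 := by positivity
          field_simp
        rw [hrw]
        nlinarith [he, hP, Real.exp_pos 1]

lemma key_exp (a : ℕ) (ha : 0 < a) (s : ℝ) (hs : 0 ≤ s) :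
    (s / a) ^ a ≤ Real.exp (s - a) := by
  have ha' : (0:ℝ) < a := by exact_mod_cast ha
  have h1 : s / a ≤ Real.exp (s / a - 1) := by
    have := Real.add_one_le_exp (s / a - 1)
    linarith
  calc (s / a) ^ a ≤ (Real.exp (s / a - 1)) ^ a :=
        pow_le_pow_left₀ (by positivity) h1 a
    _ = Real.exp ((a : ℝ) * (s / a - 1)) := by rw [← Real.exp_nat_mul]
    _ = Real.exp (s - a) := by congr 1; field_simp

lemma binPMF_ub (m j : ℕ) (p : ℝ) (hp : 0 < p) (hq : p < 1) (h1 : 1 ≤ j) (h2 : j + 1 ≤ m) :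
    binPMF m p j ≤ Real.sqrt m / (Real.sqrt j * Real.sqrt (m - j : ℕ)) := by
  set a := j with ha_def
  set b := m - j with hb_def
  have hb1 : 1 ≤ b := by omega
  have hab : a + b = m := by omega
  have haR : (0:ℝ) < a := by exact_mod_cast h1
  have hbR : (0:ℝ) < b := by exact_mod_cast hb1
  have hmR : (0:ℝ) < m := by exact_mod_cast (by omega : 0 < m)
  have hqpos : (0:ℝ) < 1 - p := by linarith
  set q : ℝ := 1 - p with hq_def
  set e : ℝ := Real.exp 1 with he_def
  have hepos : (0:ℝ) < e := Real.exp_pos 1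
  have e1 : ((m:ℝ)/e)^a * p^a = ((a:ℝ)/e)^a * ((m:ℝ)*p/a)^a := by
    rw [← mul_pow, ← mul_pow]; congr 1; field_simp
  have e2 : ((m:ℝ)/e)^b * q^b = ((b:ℝ)/e)^b * ((m:ℝ)*q/b)^b := by
    rw [← mul_pow, ← mul_pow]; congr 1; field_simp
  have hmab : ((m:ℝ)/e)^m = ((m:ℝ)/e)^a * ((m:ℝ)/e)^b := by rw [← pow_add, hab]
  have k1 : ((m:ℝ)*p/a)^a ≤ Real.exp ((m:ℝ)*p - a) := key_exp a h1 _ (by positivity)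
  have k2 : ((m:ℝ)*q/b)^b ≤ Real.exp ((m:ℝ)*q - b) := key_exp b hb1 _ (by positivity)
  have kprod : ((m:ℝ)*p/a)^a * ((m:ℝ)*q/b)^b ≤ 1 := by
    calc ((m:ℝ)*p/a)^a * ((m:ℝ)*q/b)^b
        ≤ Real.exp ((m:ℝ)*p - a) * Real.exp ((m:ℝ)*q - b) :=
          mul_le_mul k1 k2 (by positivity) (Real.exp_pos _).le
      _ = Real.exp ((m:ℝ)*p - a + ((m:ℝ)*q - b)) := (Real.exp_add _ _).symm
      _ = 1 := by
          rw [show (m:ℝ)*p - a + ((m:ℝ)*q - b) = (m:ℝ)*(p+q) - ((a:ℝ)+(b:ℝ)) by ring,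
            show (a:ℝ)+(b:ℝ) = (m:ℝ) by exact_mod_cast congrArg (Nat.cast : ℕ → ℝ) hab,
            show p + q = 1 by rw [hq_def]; ring]
          simp
  have core : 3 * ((m:ℝ)/e)^m * p^a * q^b ≤ 4 * (((a:ℝ)/e)^a * ((b:ℝ)/e)^b) := by
    have hE : ((m:ℝ)/e)^m * p^a * q^b
        = (((a:ℝ)/e)^a * ((b:ℝ)/e)^b) * (((m:ℝ)*p/a)^a * ((m:ℝ)*q/b)^b) := by
      rw [hmab]
      calc ((m:ℝ)/e)^a * ((m:ℝ)/e)^b * p^a * q^b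
          = (((m:ℝ)/e)^a * p^a) * (((m:ℝ)/e)^b * q^b) := by ring
        _ = (((a:ℝ)/e)^a * ((m:ℝ)*p/a)^a) * (((b:ℝ)/e)^b * ((m:ℝ)*q/b)^b) := by rw [e1, e2]
        _ = (((a:ℝ)/e)^a * ((b:ℝ)/e)^b) * (((m:ℝ)*p/a)^a * ((m:ℝ)*q/b)^b) := by ring
    have hDpos : (0:ℝ) ≤ ((a:ℝ)/e)^a * ((b:ℝ)/e)^b := by positivity
    calc 3 * ((m:ℝ)/e)^m * p^a * q^b
        = 3 * ((((a:ℝ)/e)^a * ((b:ℝ)/e)^b) * (((m:ℝ)*p/a)^a * ((m:ℝ)*q/b)^b)) := by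
          rw [← hE]; ring
      _ ≤ 3 * ((((a:ℝ)/e)^a * ((b:ℝ)/e)^b) * 1) := by
          apply mul_le_mul_of_nonneg_left _ (by norm_num)
          exact mul_le_mul_of_nonneg_left kprod hDpos
      _ ≤ 4 * (((a:ℝ)/e)^a * ((b:ℝ)/e)^b) := by nlinarith [hDpos]
  have hC : ((m.choose j : ℕ):ℝ) * (a ! : ℝ) * (b ! : ℝ) = (m ! : ℝ) := by
    exact_mod_cast congrArg (Nat.cast : ℕ → ℝ)
      (Nat.choose_mul_factorial_mul_factorial (by omega : j ≤ m))
  have hfa := fact_lb a h1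
  have hfb := fact_lb b hb1
  have hfm := fact_ub m (by omega)
  have hfapos : (0:ℝ) < (a ! : ℝ) := by exact_mod_cast Nat.factorial_pos a
  have hfbpos : (0:ℝ) < (b ! : ℝ) := by exact_mod_cast Nat.factorial_pos b
  have hChoose : (0:ℝ) ≤ ((m.choose j : ℕ):ℝ) := by positivity
  have main : binPMF m p j * (Real.sqrt a * Real.sqrt b) * ((a ! : ℝ) * (b ! : ℝ))
      ≤ Real.sqrt m * ((a ! : ℝ) * (b ! : ℝ)) := by
    have hpmf : binPMF m p j = ((m.choose j : ℕ):ℝ) * p^a * q^b := by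
      unfold binPMF; rw [hq_def]
    calc binPMF m p j * (Real.sqrt a * Real.sqrt b) * ((a ! : ℝ) * (b ! : ℝ))
        = (((m.choose j : ℕ):ℝ) * (a ! : ℝ) * (b ! : ℝ)) *
            (p^a * q^b * (Real.sqrt a * Real.sqrt b)) := by rw [hpmf]; ring
      _ = (m ! : ℝ) * (p^a * q^b * (Real.sqrt a * Real.sqrt b)) := by rw [hC]
      _ ≤ (3 * Real.sqrt m * ((m:ℝ)/e)^m) * (p^a * q^b * (Real.sqrt a * Real.sqrt b)) := by
          exact mul_le_mul_of_nonneg_right hfm (by positivity)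
      _ = (Real.sqrt m * (Real.sqrt a * Real.sqrt b)) * (3 * ((m:ℝ)/e)^m * p^a * q^b) := by ring
      _ ≤ (Real.sqrt m * (Real.sqrt a * Real.sqrt b)) * (4 * (((a:ℝ)/e)^a * ((b:ℝ)/e)^b)) := by
          apply mul_le_mul_of_nonneg_left core (by positivity)
      _ = Real.sqrt m * ((2 * Real.sqrt a * ((a:ℝ)/e)^a) * (2 * Real.sqrt b * ((b:ℝ)/e)^b)) := by
          ring
      _ ≤ Real.sqrt m * ((a ! : ℝ) * (b ! : ℝ)) := by
          apply mul_le_mul_of_nonneg_left _ (Real.sqrt_nonneg _)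
          exact mul_le_mul hfa hfb (by positivity) hfapos.le
  have main2 : binPMF m p j * (Real.sqrt a * Real.sqrt b) ≤ Real.sqrt m :=
    le_of_mul_le_mul_right (by rw [mul_assoc] at main ⊢; exact main) (by positivity)
  rw [le_div_iff₀ (by positivity)]
  exact main2

lemma binPMF_step (m j : ℕ) (p : ℝ) (h : j + 1 ≤ m) :
    binPMF m p (j+1) * (((j:ℝ)+1) * (1-p)) = binPMF m p j * (((m:ℝ) - j) * p) := by
  have hcast : ((m.choose (j+1) : ℕ):ℝ) * ((j:ℝ)+1) = (m.choose j : ℝ) * ((m:ℝ) - j) := by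
    have h2 : ((m.choose (j+1) * (j+1) : ℕ) : ℝ) = ((m.choose j * (m - j) : ℕ) : ℝ) := by
      exact_mod_cast congrArg (Nat.cast : ℕ → ℝ) (Nat.choose_succ_right_eq m j)
    push_cast [Nat.cast_sub (by omega : j ≤ m)] at h2
    linarith
  have hexp : (1-p)^(m-(j+1)) * (1-p) = (1-p)^(m-j) := by
    rw [← pow_succ]; congr 1; omega
  unfold binPMF
  calc (m.choose (j+1) : ℝ) * p^(j+1) * (1-p)^(m-(j+1)) * (((j:ℝ)+1)*(1-p))
      = ((m.choose (j+1) : ℝ) * ((j:ℝ)+1)) * p^(j+1) * ((1-p)^(m-(j+1))*(1-p)) := by ring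
    _ = ((m.choose j : ℝ) * ((m:ℝ) - j)) * p^(j+1) * (1-p)^(m-j) := by rw [hcast, hexp]
    _ = (m.choose j : ℝ) * p^j * (1-p)^(m-j) * (((m:ℝ) - j) * p) := by
        rw [pow_succ]; ring

lemma binPMF_up (m j : ℕ) (p : ℝ) (hp : 0 < p) (hq : p < 1)
    (hj : (j:ℝ) + 1 ≤ ((m:ℝ)+1) * p) (hjm : j + 1 ≤ m) :
    binPMF m p j ≤ binPMF m p (j+1) := by
  have hstep := binPMF_step m j p hjm
  have hmj : (0:ℝ) < (m:ℝ) - j := by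
    have : (j:ℝ) + 1 ≤ (m:ℝ) := by exact_mod_cast hjm
    linarith
  have hcond : ((j:ℝ)+1) * (1-p) ≤ ((m:ℝ) - j) * p := by nlinarith
  have hnn : 0 ≤ binPMF m p (j+1) := binPMF_nonneg m p hp.le hq.le _
  have : binPMF m p j * (((m:ℝ) - j) * p) ≤ binPMF m p (j+1) * (((m:ℝ) - j) * p) := by
    rw [← hstep]
    exact mul_le_mul_of_nonneg_left hcond hnn
  exact le_of_mul_le_mul_right this (by positivity)

lemma binPMF_down (m j : ℕ) (p : ℝ) (hp : 0 < p) (hq : p < 1)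
    (hj : ((m:ℝ)+1) * p ≤ (j:ℝ) + 1) (hjm : j + 1 ≤ m) :
    binPMF m p (j+1) ≤ binPMF m p j := by
  have hstep := binPMF_step m j p hjm
  have hcond : ((m:ℝ) - j) * p ≤ ((j:ℝ)+1) * (1-p) := by nlinarith
  have hnn : 0 ≤ binPMF m p j := binPMF_nonneg m p hp.le hq.le _
  have : binPMF m p (j+1) * (((j:ℝ)+1) * (1-p)) ≤ binPMF m p j * (((j:ℝ)+1) * (1-p)) := by
    rw [hstep]
    exact mul_le_mul_of_nonneg_left hcond hnn
  refine le_of_mul_le_mul_right this ?_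
  have hj0 : (0:ℝ) ≤ (j:ℝ) := Nat.cast_nonneg j
  nlinarith

lemma arith_aux (x y : ℝ) (hx : 49 < x) (hy : 49 < y) :
    x * y ≤ 12.25 * ((x - 1) * (y - 1)) := by
  nlinarith [mul_pos (by linarith : (0:ℝ) < x - 49) (by linarith : (0:ℝ) < y - 49)]

lemma binPMF_le_mode (m : ℕ) (p : ℝ) (hp : 0 < p) (hq : p < 1) (i : ℕ) (hi : i ≤ m) :
    binPMF m p i ≤ binPMF m p ⌊((m:ℝ)+1) * p⌋₊ := by
  set M := ⌊((m:ℝ)+1) * p⌋₊ with hM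
  have hMle : (M:ℝ) ≤ ((m:ℝ)+1) * p := Nat.floor_le (by positivity)
  have hMlt : ((m:ℝ)+1) * p < (M:ℝ) + 1 := Nat.lt_floor_add_one _
  have hMm : M ≤ m := by
    have : ((m:ℝ)+1) * p < (m:ℝ) + 1 := by nlinarith
    have := hMle.trans_lt this
    exact_mod_cast Nat.lt_succ_iff.mp (by exact_mod_cast this.trans_le (by norm_num : ((m:ℝ)+1) ≤ ((m+1:ℕ):ℝ)))
  rcases le_or_gt i M with h | h
  · obtain ⟨d, hd⟩ := Nat.le.dest h
    clear hi h
    induction d generalizing i with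
    | zero => simp at hd; rw [hd]
    | succ n ih =>
      have hi1 : i + 1 ≤ M := by omega
      have hup : binPMF m p i ≤ binPMF m p (i+1) := by
        apply binPMF_up m i p hp hq _ (by omega)
        have : ((i:ℝ) + 1) ≤ (M:ℝ) := by exact_mod_cast hi1
        linarith
      exact hup.trans (ih (i+1) (by omega))
  · obtain ⟨d, hd⟩ := Nat.le.dest h.le
    subst hd
    clear h
    induction d with
    | zero => simp
    | succ n ih =>
      have h1 : M + n + 1 ≤ m := by omega
      have hdown : binPMF m p (M + n + 1) ≤ binPMF m p (M + n) := by
        apply binPMF_down m (M + n) p hp hq _ h1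
        push_cast
        have : (0:ℝ) ≤ (n:ℝ) := Nat.cast_nonneg n
        linarith
      calc binPMF m p (M + (n+1)) = binPMF m p (M + n + 1) := by rw [Nat.add_succ]
        _ ≤ binPMF m p (M + n) := hdown
        _ ≤ binPMF m p M := ih (by omega)

/-- If `k = k(m,ε,δ)` is the largest `j ∈ {-1,…,m-1}` with `F_{Bin(m,ε)}(j) ≤ δ` and
`k ≥ 0`, then `F_{Bin(m,ε)}(k+1) − F_{Bin(m,ε)}(k−1) ≤ 7/(√(ε(1−ε)) √m)`. -/
theorem stmt_10 (m : ℕ) (hm : 1 ≤ m) (ε δ : ℝ)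
    (hε0 : 0 < ε) (hε1 : ε < 1) (hδ0 : 0 < δ) (hδ1 : δ < 1)
    (k : ℤ) (hk0 : 0 ≤ k) (hk2 : k ≤ (m : ℤ) - 1)
    (hkle : binCDFZ m ε k ≤ δ)
    (hkmax : ∀ j : ℤ, k < j → j ≤ (m : ℤ) - 1 → δ < binCDFZ m ε j) :
    binCDFZ m ε (k + 1) - binCDFZ m ε (k - 1)
      ≤ 7 / (Real.sqrt (ε * (1 - ε)) * Real.sqrt m) := by
  have hq0 : (0:ℝ) < 1 - ε := by linarith
  have hpqpos : (0:ℝ) < ε * (1 - ε) := by positivity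
  have hmpos : (0:ℝ) < (m:ℝ) := by exact_mod_cast (by omega : 0 < m)
  have hsm : (0:ℝ) < Real.sqrt m := Real.sqrt_pos.mpr hmpos
  have hspq : (0:ℝ) < Real.sqrt (ε*(1-ε)) := Real.sqrt_pos.mpr hpqpos
  rw [binCDFZ_diff m ε k hk0]
  set k₀ := k.toNat with hk₀
  have hk₀m : k₀ + 1 ≤ m := by omega
  rcases le_or_gt ((m:ℝ) * (ε * (1-ε))) 49 with hsmall | hbig
  · -- trivial case
    have h1 : binPMF m ε k₀ + binPMF m ε (k₀+1) ≤ 1 := by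
      have hpair : binPMF m ε k₀ + binPMF m ε (k₀+1)
          = ∑ i ∈ ({k₀, k₀+1} : Finset ℕ), binPMF m ε i := by
        rw [Finset.sum_pair (by omega)]
      rw [hpair, ← binPMF_sum m ε]
      apply Finset.sum_le_sum_of_subset_of_nonneg
      · intro x hx
        simp only [Finset.mem_insert, Finset.mem_singleton] at hx
        rcases hx with rfl | rfl <;> (apply Finset.mem_range.mpr; omega)
      · intro i _ _; exact binPMF_nonneg m ε hε0.le hε1.le i
    have h2 : Real.sqrt (ε*(1-ε)) * Real.sqrt m ≤ 7 := by
      rw [← Real.sqrt_mul hpqpos.le]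
      calc Real.sqrt (ε*(1-ε) * m) ≤ Real.sqrt 49 := Real.sqrt_le_sqrt (by nlinarith)
        _ = 7 := by rw [show (49:ℝ) = 7^2 by norm_num, Real.sqrt_sq (by norm_num : (0:ℝ) ≤ 7)]
    calc binPMF m ε k₀ + binPMF m ε (k₀+1) ≤ 1 := h1
      _ ≤ 7 / (Real.sqrt (ε*(1-ε)) * Real.sqrt m) := by
          rw [le_div_iff₀ (by positivity)]; linarith
  · -- large case: bound by twice the mode value
    set M := ⌊((m:ℝ)+1) * ε⌋₊ with hM
    have hMle : (M:ℝ) ≤ ((m:ℝ)+1) * ε := Nat.floor_le (by positivity)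
    have hMlt : ((m:ℝ)+1) * ε < (M:ℝ) + 1 := Nat.lt_floor_add_one _
    have hx : (49:ℝ) < (m:ℝ) * ε := by nlinarith
    have hy : (49:ℝ) < (m:ℝ) * (1-ε) := by nlinarith
    have hM1 : 1 ≤ M := by
      apply Nat.le_floor
      push_cast
      nlinarith
    have hMm : M + 1 ≤ m := by
      have h' : (M:ℝ) < (m:ℝ) := by nlinarith [hMle]
      have : M < m := by exact_mod_cast h'
      omega
    have hexp1 : ((m:ℝ)+1)*ε = (m:ℝ)*ε + ε := by ring
    have hexp2 : (m:ℝ)*(1-ε) = (m:ℝ) - (m:ℝ)*ε := by ring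
    have hMlow : (m:ℝ) * ε - 1 ≤ (M:ℝ) := by linarith
    have hMhigh : (m:ℝ) * (1-ε) - 1 ≤ (m:ℝ) - M := by linarith
    have hMpos : (0:ℝ) < (M:ℝ) := by linarith
    have hmMpos : (0:ℝ) < (m:ℝ) - M := by linarith
    have hub := binPMF_ub m M ε hε0 hε1 hM1 hMm
    have hcast : ((m - M : ℕ):ℝ) = (m:ℝ) - M := by
      rw [Nat.cast_sub (by omega)]
    rw [hcast] at hub
    have hkey : Real.sqrt m / (Real.sqrt M * Real.sqrt ((m:ℝ) - M))
        ≤ 3.5 / (Real.sqrt (ε*(1-ε)) * Real.sqrt m) := by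
      have hd1 : (0:ℝ) < Real.sqrt M * Real.sqrt ((m:ℝ) - M) :=
        mul_pos (Real.sqrt_pos.mpr hMpos) (Real.sqrt_pos.mpr hmMpos)
      rw [div_le_div_iff₀ hd1 (by positivity)]
      have l1 : Real.sqrt m * (Real.sqrt (ε*(1-ε)) * Real.sqrt m)
          = Real.sqrt (ε*(1-ε) * ((m:ℝ))^2) := by
        rw [Real.sqrt_mul hpqpos.le, Real.sqrt_sq hmpos.le,
          show Real.sqrt m * (Real.sqrt (ε*(1-ε)) * Real.sqrt m)
            = Real.sqrt (ε*(1-ε)) * (Real.sqrt m * Real.sqrt m) from by ring,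
          Real.mul_self_sqrt hmpos.le]
      have l2 : (3.5:ℝ) * (Real.sqrt M * Real.sqrt ((m:ℝ) - M))
          = Real.sqrt (12.25 * ((M:ℝ) * ((m:ℝ) - M))) := by
        rw [Real.sqrt_mul (by norm_num : (0:ℝ) ≤ 12.25),
          Real.sqrt_mul (Nat.cast_nonneg M),
          show (12.25:ℝ) = 3.5^2 by norm_num,
          Real.sqrt_sq (by norm_num : (0:ℝ) ≤ 3.5)]
      rw [l1, l2]
      apply Real.sqrt_le_sqrt
      have hprod : ((m:ℝ)*ε - 1) * ((m:ℝ)*(1-ε) - 1) ≤ (M:ℝ) * ((m:ℝ) - M) :=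
        mul_le_mul hMlow hMhigh (by linarith) (Nat.cast_nonneg M)
      calc ε * (1-ε) * ((m:ℝ))^2 = ((m:ℝ)*ε) * ((m:ℝ)*(1-ε)) := by ring
        _ ≤ 12.25 * (((m:ℝ)*ε - 1) * ((m:ℝ)*(1-ε) - 1)) := arith_aux _ _ hx hy
        _ ≤ 12.25 * ((M:ℝ) * ((m:ℝ) - M)) := by linarith
    have hmode1 : binPMF m ε k₀ ≤ binPMF m ε M := by
      have := binPMF_le_mode m ε hε0 hε1 k₀ (by omega)
      rwa [← hM] at this
    have hmode2 : binPMF m ε (k₀+1) ≤ binPMF m ε M := by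
      have := binPMF_le_mode m ε hε0 hε1 (k₀+1) (by omega)
      rwa [← hM] at this
    calc binPMF m ε k₀ + binPMF m ε (k₀+1) ≤ 2 * binPMF m ε M := by linarith
      _ ≤ 2 * (Real.sqrt m / (Real.sqrt M * Real.sqrt ((m:ℝ) - M))) := by linarith
      _ ≤ 2 * (3.5 / (Real.sqrt (ε*(1-ε)) * Real.sqrt m)) := by linarith
      _ = 7 / (Real.sqrt (ε*(1-ε)) * Real.sqrt m) := by ring
end

section
/- In the rejection sampling setup (contexts S ~ P_S, actions A|S ~ π_b, rewards R|(S,A) ~ P_R, uniform V independent of everything, acceptance event {V ≤ w(S,A)/B} with w = π_e/π_b ≤ B), the conditional distribution of (S, R) given acceptance has density P^{π_e}(s, r) = P_S(s) ∫ P_R(r|s,a) π_e(a|s) da. -/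
open MeasureTheory ProbabilityTheory
open scoped ENNReal

/-!
Write `X = ((S, A), R)` and `w = π_e / (B π_b) ∈ [0, 1]`. Since `V` is uniform and independent
of `X`, the event `V ≤ w(X)` has conditional probability `w(X)` given `X`, so on that event
the law of `X` has density `π_b P_R · w = B⁻¹ P_R π_e`. Integrating out the action gives
`B⁻¹ P^{π_e}`, and `P^{π_e}` has total mass one because `P_R` and `π_e` are normalised;
so the acceptance probability is `B⁻¹`, and conditioning divides it out.
-/

theorem volume_restrict_Icc_zero_one_Iic {t : ℝ} (ht1 : t ≤ 1) :
    volume.restrict (Set.Icc 0 1) (Set.Iic t) = ENNReal.ofReal t := by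
  have : Set.Iic t ∩ Set.Icc 0 1 = Set.Icc 0 t := by
    ext v
    simp only [Set.mem_inter_iff, Set.mem_Iic, Set.mem_Icc]
    grind
  rw [Measure.restrict_apply measurableSet_Iic, this, Real.volume_Icc, sub_zero]

theorem map_restrict_le_eq_withDensity_of_indepFun {Ω α : Type*} [MeasurableSpace Ω]
    [MeasurableSpace α] {μ : Measure Ω} [IsFiniteMeasure μ] {X : Ω → α} {V : Ω → ℝ}
    {w : α → ℝ} (hX : Measurable X) (hV : Measurable V) (hw : Measurable w)
    (hw1 : ∀ x, w x ≤ 1)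
    (hunif : μ.map V = volume.restrict (Set.Icc 0 1)) (hindep : IndepFun X V μ) :
    (μ.restrict {ω | V ω ≤ w (X ω)}).map X
      = (μ.map X).withDensity (fun x => ENNReal.ofReal (w x)) := by
  ext T hT
  set D : Set (α × ℝ) := {q | q.1 ∈ T ∧ q.2 ≤ w q.1}
  have hD : MeasurableSet D :=
    (measurable_fst hT).inter (measurableSet_le measurable_snd (hw.comp measurable_fst))
  have hslice (x : α) : volume.restrict (Set.Icc 0 1) (Prod.mk x ⁻¹' D)
      = T.indicator (fun x => ENNReal.ofReal (w x)) x := by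
    by_cases hx : x ∈ T
    · have : Prod.mk x ⁻¹' D = Set.Iic (w x) := by ext; simp [D, hx]
      rw [this, volume_restrict_Icc_zero_one_Iic (hw1 x), Set.indicator_of_mem hx]
    · have : Prod.mk x ⁻¹' D = ∅ := by ext; simp [D, hx]
      rw [this, Set.indicator_of_notMem hx, measure_empty]
  have hpre : X ⁻¹' T ∩ {ω | V ω ≤ w (X ω)} = (fun ω => (X ω, V ω)) ⁻¹' D := rfl
  rw [Measure.map_apply hX hT, Measure.restrict_apply (hX hT), withDensity_apply _ hT, hpre,
    ← Measure.map_apply (hX.prodMk hV) hD,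
    (indepFun_iff_map_prod_eq_prod_map_map hX.aemeasurable hV.aemeasurable).1 hindep, hunif,
    Measure.prod_apply hD, ← lintegral_indicator hT]
  simp_rw [hslice]

section
variable {α β γ : Type*} [MeasurableSpace α] [MeasurableSpace β] [MeasurableSpace γ]
  (μ : Measure α) (ν : Measure β) (ρ : Measure γ) [SFinite ν] [SFinite ρ]

theorem lintegral_prod_prod_eq_lintegral_lintegral_middle {f : (α × β) × γ → ℝ≥0∞}
    (hf : Measurable f) :
    ∫⁻ x, f x ∂(μ.prod ν).prod ρ = ∫⁻ p, ∫⁻ b, f ((p.1, b), p.2) ∂ν ∂μ.prod ρ := by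
  have hmiddle : Measurable fun p : α × γ => ∫⁻ b, f ((p.1, b), p.2) ∂ν := by fun_prop
  rw [lintegral_prod _ hf.aemeasurable, lintegral_prod _ hf.lintegral_prod_right'.aemeasurable,
    lintegral_prod _ hmiddle.aemeasurable]
  refine lintegral_congr fun a => lintegral_lintegral_swap ?_
  exact (hf.comp (by fun_prop)).aemeasurable

theorem map_withDensity_prod_prod_eq_withDensity_lintegral {f : (α × β) × γ → ℝ≥0∞}
    (hf : Measurable f) :
    (((μ.prod ν).prod ρ).withDensity f).map (fun x => (x.1.1, x.2))
      = (μ.prod ρ).withDensity (fun p => ∫⁻ b, f ((p.1, b), p.2) ∂ν) := by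
  have hproj : Measurable fun x : (α × β) × γ => (x.1.1, x.2) := by fun_prop
  ext T hT
  rw [Measure.map_apply hproj hT, withDensity_apply _ (hproj hT), withDensity_apply _ hT,
    ← lintegral_indicator (hproj hT), ← lintegral_indicator hT,
    lintegral_prod_prod_eq_lintegral_lintegral_middle μ ν ρ (hf.indicator (hproj hT))]
  refine lintegral_congr fun p => ?_
  by_cases hp : p ∈ T <;> simp [hp]

end

theorem lintegral_ofReal_eq_one_of_integral_eq_one {α : Type*} [MeasurableSpace α]
    {μ : Measure α} {f : α → ℝ} (hf : ∀ x, 0 ≤ f x) (h1 : ∫ x, f x ∂μ = 1) :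
    ∫⁻ x, ENNReal.ofReal (f x) ∂μ = 1 := by
  rw [← ofReal_integral_eq_lintegral_ofReal (.of_integral_ne_zero (by simp [h1]))
    (.of_forall hf), h1, ENNReal.ofReal_one]

theorem div_div_le_one_of_le_mul {b e B : ℝ} (hB : 0 < B) (hb : 0 ≤ b) (hdom : e ≤ B * b) :
    e / b / B ≤ 1 := by
  rcases hb.eq_or_lt with rfl | hb
  · simp
  · rw [div_le_one hB, div_le_iff₀ hb]
    linarith

theorem ofReal_mul_mul_ofReal_div_div_eq {b p e B : ℝ} (hB : 0 < B) (hb : 0 ≤ b) (hp : 0 ≤ p)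
    (he : 0 ≤ e) (hdom : e ≤ B * b) :
    ENNReal.ofReal (b * p) * ENNReal.ofReal (e / b / B)
      = (ENNReal.ofReal B)⁻¹ * ENNReal.ofReal (p * e) := by
  have key : b * p * (e / b / B) = B⁻¹ * (p * e) := by
    rcases hb.eq_or_lt with rfl | hb
    · simp [le_antisymm (by simpa using hdom) he]
    · field_simp
  rw [← ENNReal.ofReal_mul (mul_nonneg hb hp), key, ENNReal.ofReal_mul (inv_nonneg.2 hB.le),
    ENNReal.ofReal_inv_of_pos hB]

theorem lintegral_lintegral_ofReal_mul_eq_one {𝒮 𝒜 : Type*} [MeasurableSpace 𝒮]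
    [MeasurableSpace 𝒜] (μS : Measure 𝒮) [IsProbabilityMeasure μS]
    (ν : Measure 𝒜) [SFinite ν] {πe : 𝒮 → 𝒜 → ℝ} {PR : 𝒮 → 𝒜 → ℝ → ℝ}
    (hπemeas : Measurable (fun p : 𝒮 × 𝒜 => πe p.1 p.2))
    (hPRmeas : Measurable (fun p : (𝒮 × 𝒜) × ℝ => PR p.1.1 p.1.2 p.2))
    (hπenn : ∀ s a, 0 ≤ πe s a) (hPRnn : ∀ s a r, 0 ≤ PR s a r)
    (hπe1 : ∀ s, ∫ a, πe s a ∂ν = 1) (hPR1 : ∀ s a, ∫ r, PR s a r = 1) :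
    ∫⁻ p, ∫⁻ a, ENNReal.ofReal (PR p.1 a p.2 * πe p.1 a) ∂ν ∂μS.prod volume = 1 := by
  have hF : Measurable fun x : (𝒮 × 𝒜) × ℝ =>
      ENNReal.ofReal (PR x.1.1 x.1.2 x.2 * πe x.1.1 x.1.2) :=
    (hPRmeas.mul (hπemeas.comp measurable_fst)).ennreal_ofReal
  have hreward (s : 𝒮) (a : 𝒜) :
      ∫⁻ r, ENNReal.ofReal (PR s a r * πe s a) = ENNReal.ofReal (πe s a) := by
    simp_rw [ENNReal.ofReal_mul (hPRnn s a _)]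
    rw [lintegral_mul_const' _ _ ENNReal.ofReal_ne_top,
      lintegral_ofReal_eq_one_of_integral_eq_one (hPRnn s a) (hPR1 s a), one_mul]
  rw [← lintegral_prod_prod_eq_lintegral_lintegral_middle μS ν volume hF,
    lintegral_prod _ hF.aemeasurable]
  simp_rw [hreward]
  rw [lintegral_prod _ hπemeas.ennreal_ofReal.aemeasurable]
  simp [lintegral_ofReal_eq_one_of_integral_eq_one (hπenn _) (hπe1 _)]

theorem withDensity_lintegral_ofReal_eq_withDensity_ofReal_integral {α β : Type*}
    [MeasurableSpace α] [MeasurableSpace β] {ρ : Measure α} {ν : Measure β} [SFinite ν]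
    {f : α → β → ℝ} (hf : Measurable (Function.uncurry f)) (hnn : ∀ p b, 0 ≤ f p b)
    (hfin : ∫⁻ p, ∫⁻ b, ENNReal.ofReal (f p b) ∂ν ∂ρ ≠ ∞) :
    ρ.withDensity (fun p => ∫⁻ b, ENNReal.ofReal (f p b) ∂ν)
      = ρ.withDensity (fun p => ENNReal.ofReal (∫ b, f p b ∂ν)) := by
  refine withDensity_congr_ae ?_
  filter_upwards [ae_lt_top hf.ennreal_ofReal.lintegral_prod_right' hfin] with p hp
  have hnn' : 0 ≤ᵐ[ν] f p := .of_forall (hnn p)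
  have hint : Integrable (f p) ν := (lintegral_ofReal_ne_top_iff_integrable
    (hf.comp measurable_prodMk_left).aestronglyMeasurable hnn').1 hp.ne
  exact (ofReal_integral_eq_lintegral_ofReal hint hnn').symm

theorem map_cond_eq_of_map_restrict_eq_smul {Ω β : Type*} [MeasurableSpace Ω]
    [MeasurableSpace β] {μ : Measure Ω} {E : Set Ω} {Y : Ω → β} (hY : Measurable Y)
    {c : ℝ≥0∞} (hc0 : c ≠ 0) (hc : c ≠ ∞) {P : Measure β} [IsProbabilityMeasure P]
    (h : (μ.restrict E).map Y = c • P) :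
    (μ[|E]).map Y = P := by
  have hμE : μ E = c := by
    simpa [Measure.map_apply hY .univ] using congrArg (· Set.univ) h
  rw [ProbabilityTheory.cond, Measure.map_smul, h, hμE, smul_smul, ENNReal.inv_mul_cancel hc0 hc,
    one_smul]

theorem stmt_12_general {𝒮 𝒜 Ω : Type*} [MeasurableSpace 𝒮] [MeasurableSpace 𝒜] [MeasurableSpace Ω]
    (μ : Measure Ω) [IsProbabilityMeasure μ]
    (μS : Measure 𝒮) [IsProbabilityMeasure μS] (ν : Measure 𝒜) [SigmaFinite ν]
    (πb πe : 𝒮 → 𝒜 → ℝ) (PR : 𝒮 → 𝒜 → ℝ → ℝ)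
    (hπbmeas : Measurable (fun p : 𝒮 × 𝒜 => πb p.1 p.2))
    (hπemeas : Measurable (fun p : 𝒮 × 𝒜 => πe p.1 p.2))
    (hPRmeas : Measurable (fun p : (𝒮 × 𝒜) × ℝ => PR p.1.1 p.1.2 p.2))
    (hπbnn : ∀ s a, 0 ≤ πb s a) (hπenn : ∀ s a, 0 ≤ πe s a)
    (hPRnn : ∀ s a r, 0 ≤ PR s a r)
    (hπe1 : ∀ s, ∫ a, πe s a ∂ν = 1)
    (hPR1 : ∀ s a, ∫ r, PR s a r = 1)
    (B : ℝ) (hB : 0 < B) (hdom : ∀ s a, πe s a ≤ B * πb s a)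
    (S : Ω → 𝒮) (A : Ω → 𝒜) (R : Ω → ℝ) (V : Ω → ℝ)
    (hS : Measurable S) (hA : Measurable A) (hR : Measurable R) (hV : Measurable V)
    (hlaw : μ.map (fun ω => ((S ω, A ω), R ω))
      = ((μS.prod ν).prod (volume : Measure ℝ)).withDensity
          (fun p => ENNReal.ofReal (πb p.1.1 p.1.2 * PR p.1.1 p.1.2 p.2)))
    (hunif : μ.map V = (volume : Measure ℝ).restrict (Set.Icc 0 1))
    (hindep : IndepFun (fun ω => ((S ω, A ω), R ω)) V μ) :
    (μ[|{ω | V ω ≤ (πe (S ω) (A ω) / πb (S ω) (A ω)) / B}]).map (fun ω => (S ω, R ω))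
      = (μS.prod (volume : Measure ℝ)).withDensity
          (fun p => ENNReal.ofReal (∫ a, PR p.1 a p.2 * πe p.1 a ∂ν)) := by
  set X : Ω → (𝒮 × 𝒜) × ℝ := fun ω => ((S ω, A ω), R ω)
  set F : (𝒮 × 𝒜) × ℝ → ℝ≥0∞ := fun x => ENNReal.ofReal (PR x.1.1 x.1.2 x.2 * πe x.1.1 x.1.2)
  have hX : Measurable X := (hS.prodMk hA).prodMk hR
  have hF : Measurable F := (hPRmeas.mul (hπemeas.comp measurable_fst)).ennreal_ofReal
  have hw : Measurable fun x : (𝒮 × 𝒜) × ℝ => πe x.1.1 x.1.2 / πb x.1.1 x.1.2 / B := by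
    fun_prop
  have hfb : Measurable fun x : (𝒮 × 𝒜) × ℝ =>
      ENNReal.ofReal (πb x.1.1 x.1.2 * PR x.1.1 x.1.2 x.2) :=
    ((hπbmeas.comp measurable_fst).mul hPRmeas).ennreal_ofReal
  have hlawE : (μ.restrict {ω | V ω ≤ (πe (S ω) (A ω) / πb (S ω) (A ω)) / B}).map X
      = (ENNReal.ofReal B)⁻¹ • ((μS.prod ν).prod volume).withDensity F := by
    rw [map_restrict_le_eq_withDensity_of_indepFun hX hV hw
      (fun x => div_div_le_one_of_le_mul hB (hπbnn _ _) (hdom _ _)) hunif hindep, hlaw,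
      ← withDensity_mul _ hfb hw.ennreal_ofReal, ← withDensity_smul _ hF]
    congr 1 with x
    exact ofReal_mul_mul_ofReal_div_div_eq hB (hπbnn _ _) (hPRnn _ _ _) (hπenn _ _) (hdom _ _)
  have hmass : ∫⁻ p, ∫⁻ a, ENNReal.ofReal (PR p.1 a p.2 * πe p.1 a) ∂ν ∂μS.prod volume = 1 :=
    lintegral_lintegral_ofReal_mul_eq_one μS ν hπemeas hPRmeas hπenn hPRnn hπe1 hPR1
  have hPe : IsProbabilityMeasure ((μS.prod volume).withDensity
      fun p => ∫⁻ a, F ((p.1, a), p.2) ∂ν) :=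
    ⟨by rw [withDensity_apply _ .univ, Measure.restrict_univ]; exact hmass⟩
  rw [map_cond_eq_of_map_restrict_eq_smul (hS.prodMk hR)
    (ENNReal.inv_ne_zero.2 ENNReal.ofReal_ne_top) (ENNReal.inv_ne_top.2 (by simpa using hB))
    (by rw [show (fun ω => (S ω, R ω)) = (fun x : (𝒮 × 𝒜) × ℝ => (x.1.1, x.2)) ∘ X from rfl,
      ← Measure.map_map (by fun_prop) hX, hlawE, Measure.map_smul,
      map_withDensity_prod_prod_eq_withDensity_lintegral _ _ _ hF])]
  have hf : Measurable (Function.uncurry fun (p : 𝒮 × ℝ) (a : 𝒜) => PR p.1 a p.2 * πe p.1 a) :=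
    (hPRmeas.comp (f := fun q : (𝒮 × ℝ) × 𝒜 => ((q.1.1, q.2), q.1.2)) (by fun_prop)).mul
      (hπemeas.comp (f := fun q : (𝒮 × ℝ) × 𝒜 => (q.1.1, q.2)) (by fun_prop))
  exact withDensity_lintegral_ofReal_eq_withDensity_ofReal_integral hf
    (fun _ _ => mul_nonneg (hPRnn _ _ _) (hπenn _ _)) (hmass ▸ ENNReal.one_ne_top)

/-- Rejection sampling: if the joint law of `((S,A),R)` has density
`π_b(a|s) P_R(r|s,a)` w.r.t. `(P_S × ν) × Leb`, `V ~ U([0,1])` is independent of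
`((S,A),R)`, and acceptance means `V ≤ w(S,A)/B` with `w = π_e/π_b ≤ B`, then the
conditional law of `(S,R)` given acceptance has density
`P^{π_e}(s,r) = ∫ P_R(r|s,a) π_e(a|s) da` w.r.t. `P_S × Leb`. -/
theorem stmt_12 {𝒮 𝒜 Ω : Type*} [MeasurableSpace 𝒮] [MeasurableSpace 𝒜] [MeasurableSpace Ω]
    (μ : Measure Ω) [IsProbabilityMeasure μ]
    (μS : Measure 𝒮) [IsProbabilityMeasure μS] (ν : Measure 𝒜) [SigmaFinite ν]
    (πb πe : 𝒮 → 𝒜 → ℝ) (PR : 𝒮 → 𝒜 → ℝ → ℝ)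
    (hπbmeas : Measurable (fun p : 𝒮 × 𝒜 => πb p.1 p.2))
    (hπemeas : Measurable (fun p : 𝒮 × 𝒜 => πe p.1 p.2))
    (hPRmeas : Measurable (fun p : (𝒮 × 𝒜) × ℝ => PR p.1.1 p.1.2 p.2))
    (hπbnn : ∀ s a, 0 ≤ πb s a) (hπenn : ∀ s a, 0 ≤ πe s a)
    (hPRnn : ∀ s a r, 0 ≤ PR s a r)
    (hπb1 : ∀ s, ∫ a, πb s a ∂ν = 1) (hπe1 : ∀ s, ∫ a, πe s a ∂ν = 1)
    (hPR1 : ∀ s a, ∫ r, PR s a r = 1)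
    (B : ℝ) (hB : 0 < B) (hdom : ∀ s a, πe s a ≤ B * πb s a)
    (S : Ω → 𝒮) (A : Ω → 𝒜) (R : Ω → ℝ) (V : Ω → ℝ)
    (hS : Measurable S) (hA : Measurable A) (hR : Measurable R) (hV : Measurable V)
    (hlaw : μ.map (fun ω => ((S ω, A ω), R ω))
      = ((μS.prod ν).prod (volume : Measure ℝ)).withDensity
          (fun p => ENNReal.ofReal (πb p.1.1 p.1.2 * PR p.1.1 p.1.2 p.2)))
    (hunif : μ.map V = (volume : Measure ℝ).restrict (Set.Icc 0 1))
    (hindep : IndepFun (fun ω => ((S ω, A ω), R ω)) V μ) :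
    (μ[|{ω | V ω ≤ (πe (S ω) (A ω) / πb (S ω) (A ω)) / B}]).map (fun ω => (S ω, R ω))
      = (μS.prod (volume : Measure ℝ)).withDensity
          (fun p => ENNReal.ofReal (∫ a, PR p.1 a p.2 * πe p.1 a ∂ν)) :=
  stmt_12_general μ μS ν πb πe PR hπbmeas hπemeas hPRmeas hπbnn hπenn hPRnn hπe1 hPR1 B hB hdom S A
    R V hS hA hR hV hlaw hunif hindep
end

section
/- Let τ₁, …, τ_M be i.i.d. real random variables, and for a monotone family of intervals Ĉ_τ define the miscoverage L(τ) := P[(S,R) : R ∉ Ĉ_τ(S)], a decreasing right-continuous function of τ, and τ* := inf{τ : L(τ) ≤ ε}. If τ̃ = τ_{(M−k)} is the (M−k)-th order statistic with k = k(M, ε, δ) = max{j : F_{Bin(M,ε)}(j) ≤ δ}, then P[L(τ̃) > ε] ≤ δ. -/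
open MeasureTheory ProbabilityTheory

/-- The `j`-th smallest value (1-indexed) among `v 0, …, v (M-1)`. -/
noncomputable def orderStat {M : ℕ} (v : Fin M → ℝ) (j : ℕ) : ℝ :=
  (List.insertionSort (· ≤ ·) (List.ofFn v)).getD (j - 1) 0

/-- Binomial CDF: `F_{Bin(m,p)}(k) = ∑_{i=0}^k C(m,i) p^i (1-p)^{m-i}`. -/
noncomputable def binCDF (m : ℕ) (p : ℝ) (k : ℕ) : ℝ :=
  ∑ i ∈ Finset.range (k + 1), (m.choose i : ℝ) * p ^ i * (1 - p) ^ (m - i)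

open Finset Set
open scoped ENNReal

/-! Let `A = {t | ε < L t}`, a lower set since `L` is antitone. For `a ∈ A`, the event
`τ̃ ≤ a` says that at most `k` of the independent events `{a < τᵢ}`, each of probability
`L a > ε`, occur; so it has probability `F_{Bin(M, L a)}(k) ≤ F_{Bin(M, ε)}(k) ≤ δ`, the
binomial CDF being decreasing in `p` (in the Bernstein basis its derivative telescopes to
`-M b_{M-1,k}`). Continuity from below along the lower set `A`, which plays the role of the
paper's limit `τ* - α ↑ τ*`, gives `P[τ̃ ∈ A] ≤ δ`. -/

theorem List.Pairwise.getElem_le_iff_lt_countP {α : Type*} [LinearOrder α] {l : List α}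
    (hl : l.Pairwise (· ≤ ·)) {j : ℕ} (hj : j < l.length) (t : α) :
    l[j] ≤ t ↔ j < l.countP (· ≤ t) := by
  induction l generalizing j with
  | nil => simp at hj
  | cons a l ih =>
    rw [List.pairwise_cons] at hl
    by_cases ha : a ≤ t
    · cases j with
      | zero => simp [ha]
      | succ j => simp [ha, ih hl.2]
    · have hlt : ∀ x ∈ a :: l, t < x := by
        simp only [List.mem_cons, forall_eq_or_imp]
        exact ⟨not_le.1 ha, fun x hx => (not_le.1 ha).trans_le (hl.1 x hx)⟩
      have h0 : (a :: l).countP (· ≤ t) = 0 :=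
        List.countP_eq_zero.2 fun x hx => by simpa using hlt x hx
      simp only [h0, Nat.not_lt_zero, iff_false, not_le]
      exact hlt _ (List.getElem_mem hj)

theorem List.countP_ofFn {α : Type*} {M : ℕ} (v : Fin M → α) (p : α → Bool) :
    (List.ofFn v).countP p = #{i | p (v i)} := by
  rw [List.ofFn_eq_map, List.countP_map, Fin.univ_def, Finset.card_def, Finset.filter_val]
  simp [List.countP_eq_length_filter, Function.comp_def]

theorem orderStat_succ_le_iff {M : ℕ} (v : Fin M → ℝ) {j : ℕ} (hj : j < M) (t : ℝ) :
    orderStat v (j + 1) ≤ t ↔ j < #{i | v i ≤ t} := by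
  set l := List.insertionSort (· ≤ ·) (List.ofFn v)
  have hjl : j < l.length := by rwa [List.length_insertionSort, List.length_ofFn]
  rw [orderStat, Nat.add_sub_cancel, List.getD_eq_getElem _ _ hjl,
    (List.pairwise_insertionSort _ _).getElem_le_iff_lt_countP hjl,
    (List.perm_insertionSort _ _).countP_eq, List.countP_ofFn]
  simp

theorem orderStat_sub_le_iff {M : ℕ} (v : Fin M → ℝ) {k : ℕ} (hk : k < M) (t : ℝ) :
    orderStat v (M - k) ≤ t ↔ #{i | t < v i} ≤ k := by
  have hcard := card_filter_add_card_filter_not (s := univ) (fun i => v i ≤ t)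
  simp only [not_le, card_univ, Fintype.card_fin] at hcard
  rw [show M - k = (M - k - 1) + 1 by omega, orderStat_succ_le_iff v (by omega)]
  omega

theorem Finset.prod_ite_mem_eq_pow_mul_pow {ι M : Type*} [Fintype ι] [DecidableEq ι]
    [CommMonoid M] (s : Finset ι) (a b : M) :
    ∏ i, (if i ∈ s then a else b) = a ^ #s * b ^ (Fintype.card ι - #s) := by
  rw [prod_ite, prod_const, prod_const, ← card_compl, filter_mem_eq_inter, Finset.univ_inter]
  simp [filter_not, compl_eq_univ_sdiff]

section
variable {Ω ι : Type*} [Fintype ι] (τ : ι → Ω → ℝ) (t : ℝ)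

theorem setOf_filter_lt_eq [DecidableEq ι] (s : Finset ι) :
    {ω | ({i | t < τ i ω} : Finset ι) = s} =
      ⋂ i, τ i ⁻¹' (if i ∈ s then Ioi t else Iic t) := by
  ext ω
  simp only [mem_ofPred_eq, Finset.ext_iff, Finset.mem_filter, Finset.mem_univ, true_and,
    mem_iInter, Set.mem_preimage]
  refine forall_congr' fun i => ?_
  split_ifs with h <;> simp [h]

theorem setOf_card_filter_lt_eq (j : ℕ) :
    {ω | #({i | t < τ i ω} : Finset ι) = j} =
      ⋃ s ∈ powersetCard j (univ : Finset ι), {ω | ({i | t < τ i ω} : Finset ι) = s} := by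
  ext ω
  simp [eq_comm]

theorem setOf_card_filter_lt_le (k : ℕ) :
    {ω | #({i | t < τ i ω} : Finset ι) ≤ k} =
      ⋃ j ∈ range (k + 1), {ω | #({i | t < τ i ω} : Finset ι) = j} := by
  ext ω
  simp
end

section
variable {Ω ι : Type*} [MeasurableSpace Ω] {μ : Measure Ω} [IsProbabilityMeasure μ]
  [Fintype ι] {τ : ι → Ω → ℝ} {t : ℝ} {p : ℝ≥0∞}

theorem measurableSet_filter_lt_eq (hτ : ∀ i, Measurable (τ i)) (s : Finset ι) :
    MeasurableSet {ω | ({i | t < τ i ω} : Finset ι) = s} := by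
  classical
  rw [setOf_filter_lt_eq]
  exact .iInter fun i => hτ i (by split_ifs <;> measurability)

theorem measure_filter_lt_eq (hτ : ∀ i, Measurable (τ i)) (hind : iIndepFun τ μ)
    (hp : ∀ i, μ {ω | t < τ i ω} = p) (s : Finset ι) :
    μ {ω | ({i | t < τ i ω} : Finset ι) = s} = p ^ #s * (1 - p) ^ (Fintype.card ι - #s) := by
  classical
  have hIic : ∀ i, μ (τ i ⁻¹' Iic t) = 1 - p := fun i => by
    rw [← hp i, ← compl_Ioi, preimage_compl, prob_compl_eq_one_sub (hτ i measurableSet_Ioi)]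
    rfl
  rw [setOf_filter_lt_eq, ← Finset.prod_ite_mem_eq_pow_mul_pow]
  have := hind.measure_inter_preimage_eq_mul univ
    (sets := fun i => if i ∈ s then Ioi t else Iic t) (fun i _ => by split_ifs <;> measurability)
  simp only [Finset.mem_univ, iInter_true] at this
  rw [this]
  refine Finset.prod_congr rfl fun i _ => ?_
  split_ifs
  · exact hp i
  · exact hIic i

theorem measure_card_filter_lt_eq (hτ : ∀ i, Measurable (τ i)) (hind : iIndepFun τ μ)
    (hp : ∀ i, μ {ω | t < τ i ω} = p) (j : ℕ) :
    μ {ω | #({i | t < τ i ω} : Finset ι) = j} =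
      (Fintype.card ι).choose j * p ^ j * (1 - p) ^ (Fintype.card ι - j) := by
  rw [setOf_card_filter_lt_eq, measure_biUnion_finset]
  · rw [Finset.sum_congr rfl fun s hs => by
      rw [measure_filter_lt_eq hτ hind hp, (Finset.mem_powersetCard.1 hs).2]]
    rw [sum_const, card_powersetCard, card_univ, nsmul_eq_mul, mul_assoc]
  · intro s _ s' _ hss'
    exact Set.disjoint_left.2 fun ω hs hs' => hss' (hs.symm.trans hs')
  · exact fun s _ => measurableSet_filter_lt_eq hτ s

theorem measure_card_filter_lt_le (hτ : ∀ i, Measurable (τ i)) (hind : iIndepFun τ μ)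
    (hp : ∀ i, μ {ω | t < τ i ω} = p) (k : ℕ) :
    μ {ω | #({i | t < τ i ω} : Finset ι) ≤ k} =
      ∑ j ∈ range (k + 1),
        (Fintype.card ι).choose j * p ^ j * (1 - p) ^ (Fintype.card ι - j) := by
  rw [setOf_card_filter_lt_le, measure_biUnion_finset]
  · exact Finset.sum_congr rfl fun j _ => measure_card_filter_lt_eq hτ hind hp j
  · intro j _ j' _ hjj'
    exact Set.disjoint_left.2 fun ω hj hj' => hjj' (hj.symm.trans hj')
  · intro j _
    rw [setOf_card_filter_lt_eq]
    exact Finset.measurableSet_biUnion _ fun s _ => measurableSet_filter_lt_eq hτ s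
end

theorem ofReal_binCDF (n k : ℕ) {p : ℝ} (hp₀ : 0 ≤ p) (hp₁ : p ≤ 1) :
    ENNReal.ofReal (binCDF n p k) =
      ∑ j ∈ range (k + 1),
        n.choose j * ENNReal.ofReal p ^ j * (1 - ENNReal.ofReal p) ^ (n - j) := by
  rw [binCDF, ENNReal.ofReal_sum_of_nonneg fun j _ => by have := sub_nonneg.2 hp₁; positivity]
  refine Finset.sum_congr rfl fun j _ => ?_
  rw [← ENNReal.ofReal_one, ← ENNReal.ofReal_sub _ hp₀, ENNReal.ofReal_mul (by positivity),
    ENNReal.ofReal_mul (by positivity), ENNReal.ofReal_pow hp₀, ENNReal.ofReal_pow (by linarith),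
    ENNReal.ofReal_natCast]

open Polynomial in
theorem binCDF_eq_eval (n : ℕ) (p : ℝ) (k : ℕ) :
    binCDF n p k = (∑ i ∈ range (k + 1), bernsteinPolynomial ℝ n i).eval p := by
  simp [binCDF, bernsteinPolynomial, eval_finsetSum]

open Polynomial in
theorem derivative_sum_bernsteinPolynomial {R : Type*} [CommRing R] (n k : ℕ) :
    derivative (∑ i ∈ range (k + 1), bernsteinPolynomial R n i) =
      -(n * bernsteinPolynomial R (n - 1) k) := by
  induction k with
  | zero => simp [bernsteinPolynomial.derivative_zero]
  | succ k ih =>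
    rw [sum_range_succ, derivative_add, ih, bernsteinPolynomial.derivative_succ]
    ring

open Polynomial in
theorem binCDF_antitoneOn (n k : ℕ) : AntitoneOn (fun p => binCDF n p k) (Icc 0 1) := by
  simp_rw [binCDF_eq_eval]
  set P := ∑ i ∈ range (k + 1), bernsteinPolynomial ℝ n i
  refine antitoneOn_of_deriv_nonpos (convex_Icc 0 1) P.continuousOn P.differentiableOn ?_
  intro x hx
  rw [interior_Icc] at hx
  have hx₀ : 0 ≤ x := hx.1.le
  have hx₁ : 0 ≤ 1 - x := by linarith [hx.2]
  have hb : 0 ≤ (bernsteinPolynomial ℝ (n - 1) k).eval x := by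
    simp only [bernsteinPolynomial, eval_mul, eval_pow, eval_sub, eval_one, eval_X, eval_natCast]
    positivity
  rw [Polynomial.deriv, derivative_sum_bernsteinPolynomial]
  simp only [eval_neg, eval_mul, eval_natCast]
  nlinarith [Nat.cast_nonneg (α := ℝ) n]

theorem measure_preimage_le_of_isLowerSet {Ω : Type*} [MeasurableSpace Ω] (μ : Measure Ω)
    {X : Ω → ℝ} {A : Set ℝ} (hA : IsLowerSet A) {c : ℝ≥0∞}
    (hc : ∀ a ∈ A, μ {ω | X ω ≤ a} ≤ c) : μ (X ⁻¹' A) ≤ c := by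
  -- `A` is order-connected, so `atTop` on the subtype `A` is countably generated
  have := hA.ordConnected
  have hmono : Monotone fun a : A => {ω | X ω ≤ a} :=
    fun a b hab ω (hω : X ω ≤ a) => hω.trans hab
  calc μ (X ⁻¹' A) ≤ μ (⋃ a : A, {ω | X ω ≤ a}) :=
        measure_mono fun ω hω => mem_iUnion.2 ⟨⟨X ω, hω⟩, le_refl (X ω)⟩
    _ = ⨆ a : A, μ {ω | X ω ≤ a} := hmono.measure_iUnion
    _ ≤ c := iSup_le fun a => hc a a.2

theorem stmt_14_general {Ω : Type*} [MeasurableSpace Ω] (μ : Measure Ω) [IsProbabilityMeasure μ]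
    (M : ℕ) (hM : 1 ≤ M) (τ : Fin M → Ω → ℝ)
    (hmeas : ∀ i, Measurable (τ i))
    (hindep : iIndepFun τ μ)
    (L : ℝ → ℝ) (hL : ∀ (i : Fin M) (t : ℝ), (μ {ω | t < τ i ω}).toReal = L t)
    (ε δ : ℝ) (hε0 : 0 < ε)
    (k : ℕ) (hkM : k ≤ M - 1)
    (hkle : binCDF M ε k ≤ δ) :
    μ {ω | ε < L (orderStat (fun i => τ i ω) (M - k))} ≤ ENNReal.ofReal δ := by
  let i₀ : Fin M := ⟨0, hM⟩
  have hLμ (i : Fin M) (t : ℝ) : μ {ω | t < τ i ω} = ENNReal.ofReal (L t) := by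
    rw [← hL i t, ENNReal.ofReal_toReal (measure_ne_top μ _)]
  have hL_anti : Antitone L := fun s t hst => by
    rw [← hL i₀ s, ← hL i₀ t]
    exact ENNReal.toReal_mono (measure_ne_top μ _) (measure_mono fun ω h => hst.trans_lt h)
  have hL_le_one (t : ℝ) : L t ≤ 1 := hL i₀ t ▸ ENNReal.toReal_le_of_le_ofReal zero_le_one
    (ENNReal.ofReal_one ▸ prob_le_one)
  refine measure_preimage_le_of_isLowerSet μ (X := fun ω => orderStat (fun i => τ i ω) (M - k))
    (A := {t | ε < L t}) (fun s t hst hs => hs.trans_le (hL_anti hst)) fun a ha => ?_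
  have hp : 0 ≤ L a := hε0.le.trans ha.le
  have hcount :
      {ω | orderStat (fun i => τ i ω) (M - k) ≤ a} = {ω | #{i | a < τ i ω} ≤ k} := by
    ext ω
    exact orderStat_sub_le_iff _ (by omega) a
  rw [hcount, measure_card_filter_lt_le hmeas hindep (hLμ · a), Fintype.card_fin,
    ← ofReal_binCDF M k hp (hL_le_one a)]
  have hε_mem : ε ∈ Icc (0 : ℝ) 1 := ⟨hε0.le, ha.le.trans (hL_le_one a)⟩
  exact ENNReal.ofReal_le_ofReal <|
    (binCDF_antitoneOn M k hε_mem ⟨hp, hL_le_one a⟩ ha.le).trans hkle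

/-- PAC validity: if `τ₁,…,τ_M` are i.i.d., `L(t) = P[τᵢ > t]` is the miscoverage of
the interval `Ĉ_t`, and `τ̃ = τ_{(M−k)}` with `k = k(M,ε,δ)` the largest
`j ≤ M−1` with `F_{Bin(M,ε)}(j) ≤ δ`, then `P[L(τ̃) > ε] ≤ δ`. -/
theorem stmt_14 {Ω : Type*} [MeasurableSpace Ω] (μ : Measure Ω) [IsProbabilityMeasure μ]
    (M : ℕ) (hM : 1 ≤ M) (τ : Fin M → Ω → ℝ)
    (hmeas : ∀ i, Measurable (τ i))
    (hindep : iIndepFun τ μ)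
    (hident : ∀ i j, IdentDistrib (τ i) (τ j) μ μ)
    (L : ℝ → ℝ) (hL : ∀ (i : Fin M) (t : ℝ), (μ {ω | t < τ i ω}).toReal = L t)
    (ε δ : ℝ) (hε0 : 0 < ε) (hε1 : ε < 1) (hδ0 : 0 < δ) (hδ1 : δ < 1)
    (k : ℕ) (hkM : k ≤ M - 1)
    (hkle : binCDF M ε k ≤ δ)
    (hkmax : ∀ j : ℕ, k < j → j ≤ M - 1 → δ < binCDF M ε j) :
    μ {ω | ε < L (orderStat (fun i => τ i ω) (M - k))} ≤ ENNReal.ofReal δ :=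
  stmt_14_general μ M hM τ hmeas hindep L hL ε δ hε0 k hkM hkle
end

section
/- In the setting of the previous statement, assume additionally that the τᵢ have a continuous distribution (no ties a.s.) and that k = k(M,ε,δ) ≥ 0. Then P[L(τ̃) ≤ ε] ≤ 1 − F_{Bin(M,ε)}(k−1). -/
/-!
Let `t₀` be the least `t` with `L t ≤ ε`; it exists because `L = 1 - F` for the distribution
function `F` of `τᵢ`, which is right-continuous with limits `0` and `1`. If `L τ̃ ≤ ε` then
`τ̃ ≥ t₀`, so at least `k + 1` of the `τᵢ` are `≥ t₀`. The events `{τᵢ ≥ t₀}` are independent and,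
as `τᵢ` has no atoms, each has probability `L t₀ ≤ ε`. The number of independent events with
probabilities at most `ε` that occur is stochastically dominated by `Bin(M, ε)`, which bounds the
probability that at least `k` of them occur by `1 - F_{Bin(M,ε)}(k - 1)`.
-/

open MeasureTheory ProbabilityTheory

open Finset

-- `binomCDF p n k = P[Bin(n, p) < k]`, i.e. `F_{Bin(n,p)}(k - 1)`.
noncomputable def binomCDF (p : ℝ) (n k : ℕ) : ℝ :=
  ∑ i ∈ range k, (n.choose i : ℝ) * p ^ i * (1 - p) ^ (n - i)

lemma binCDFZ_natCast_sub_one (m k : ℕ) (p : ℝ) :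
    binCDFZ m p ((k : ℤ) - 1) = binomCDF p m k := by
  rcases k with _ | k <;> simp [binCDFZ, binomCDF]

lemma binomCDF_zero_left (p : ℝ) {k : ℕ} (hk : k ≠ 0) : binomCDF p 0 k = 1 := by
  obtain ⟨k, rfl⟩ := Nat.exists_eq_succ_of_ne_zero hk
  simp [binomCDF, sum_range_succ']

lemma binomCDF_monotone {p : ℝ} (hp0 : 0 ≤ p) (hp1 : p ≤ 1) (n : ℕ) :
    Monotone (binomCDF p n) :=
  monotone_nat_of_le_succ fun k => by
    rw [binomCDF, binomCDF, sum_range_succ, le_add_iff_nonneg_right]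
    have : 0 ≤ 1 - p := by linarith
    positivity

lemma choose_mul_pow_pascal (p : ℝ) (n i : ℕ) :
    ((n + 1).choose (i + 1) : ℝ) * p ^ (i + 1) * (1 - p) ^ (n + 1 - (i + 1))
      = (1 - p) * ((n.choose (i + 1) : ℝ) * p ^ (i + 1) * (1 - p) ^ (n - (i + 1)))
        + p * ((n.choose i : ℝ) * p ^ i * (1 - p) ^ (n - i)) := by
  rw [Nat.choose_succ_succ', Nat.cast_add]
  rcases lt_or_ge i n with hi | hi
  · obtain ⟨d, rfl⟩ := Nat.exists_eq_add_of_lt hi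
    rw [show i + d + 1 + 1 - (i + 1) = d + 1 by omega, show i + d + 1 - (i + 1) = d by omega,
      show i + d + 1 - i = d + 1 by omega]
    ring
  · rw [Nat.choose_eq_zero_of_lt (Nat.lt_succ_of_le hi), show n + 1 - (i + 1) = n - i by omega]
    ring

lemma binomCDF_succ_left (p : ℝ) (n k : ℕ) :
    binomCDF p (n + 1) k = (1 - p) * binomCDF p n k + p * binomCDF p n (k - 1) := by
  rcases k with _ | k
  · simp [binomCDF]
  · simp only [binomCDF, sum_range_succ', choose_mul_pow_pascal, sum_add_distrib, ← mul_sum,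
      Nat.add_sub_cancel, Nat.choose_zero_right, Nat.cast_one, pow_zero, mul_one, one_mul,
      tsub_zero]
    ring

section PatternSums

variable {ι : Type*} [DecidableEq ι]

noncomputable def probAtLeast (q : ι → ℝ) (s : Finset ι) (k : ℕ) : ℝ :=
  ∑ T ∈ s.powerset, if k ≤ #T then (∏ i ∈ T, q i) * ∏ i ∈ s \ T, (1 - q i) else 0

lemma probAtLeast_empty (q : ι → ℝ) (k : ℕ) : probAtLeast q ∅ k = if k = 0 then 1 else 0 := by
  simp [probAtLeast]

lemma probAtLeast_insert (q : ι → ℝ) {s : Finset ι} {a : ι} (ha : a ∉ s) (k : ℕ) :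
    probAtLeast q (insert a s) k
      = (1 - q a) * probAtLeast q s k + q a * probAtLeast q s (k - 1) := by
  rw [probAtLeast, sum_powerset_insert ha, probAtLeast, probAtLeast, mul_sum, mul_sum]
  congr 1 <;> refine sum_congr rfl fun T hT => ?_ <;>
    have haT : a ∉ T := fun h => ha (mem_powerset.1 hT h)
  · rw [insert_sdiff_of_notMem _ haT, prod_insert fun h => ha (mem_sdiff.1 h).1]
    split_ifs <;> ring
  · rw [insert_sdiff_insert, sdiff_insert_of_notMem ha, card_insert_of_notMem haT, prod_insert haT]
    simp only [show k ≤ #T + 1 ↔ k - 1 ≤ #T by omega]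
    split_ifs <;> ring

lemma probAtLeast_antitone {q : ι → ℝ} {s : Finset ι} (hq : ∀ i ∈ s, q i ∈ Set.Icc 0 1) :
    Antitone (probAtLeast q s) := fun j k hjk => by
  refine sum_le_sum fun T hT => ?_
  have hT : T ⊆ s := mem_powerset.1 hT
  have : 0 ≤ (∏ i ∈ T, q i) * ∏ i ∈ s \ T, (1 - q i) :=
    mul_nonneg (prod_nonneg fun i hi => (hq i (hT hi)).1)
      (prod_nonneg fun i hi => sub_nonneg.2 (hq i (mem_sdiff.1 hi).1).2)
  split_ifs <;> first | exact le_rfl | exact this | omega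

lemma probAtLeast_le_one_sub_binomCDF {p : ℝ} (hp : p ≤ 1) {q : ι → ℝ} {s : Finset ι}
    (hq : ∀ i ∈ s, q i ∈ Set.Icc 0 p) (k : ℕ) : probAtLeast q s k ≤ 1 - binomCDF p #s k := by
  induction s using Finset.induction_on generalizing k with
  | empty =>
    rcases eq_or_ne k 0 with rfl | hk
    · simp [probAtLeast_empty, binomCDF]
    · simp [probAtLeast_empty, binomCDF_zero_left p hk, hk]
  | @insert a s ha ih =>
    have hq' : ∀ i ∈ s, q i ∈ Set.Icc 0 p := fun i hi => hq i (mem_insert_of_mem hi)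
    obtain ⟨hqa0, hqap⟩ := hq a (mem_insert_self a s)
    rw [probAtLeast_insert q ha, card_insert_of_notMem ha, binomCDF_succ_left]
    have hP := probAtLeast_antitone (fun i hi => ⟨(hq' i hi).1, (hq' i hi).2.trans hp⟩)
      (Nat.sub_le k 1)
    have hB := binomCDF_monotone (hqa0.trans hqap) hp #s (Nat.sub_le k 1)
    nlinarith [ih hq' k, ih hq' (k - 1)]

end PatternSums

section Independence

variable {Ω : Type*} [MeasurableSpace Ω] {μ : Measure Ω} {ι : Type*}

lemma ProbabilityTheory.iIndepFun.iIndepSet_preimage [IsProbabilityMeasure μ] {β : Type*}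
    [MeasurableSpace β] {X : ι → Ω → β} (hX : iIndepFun X μ) (hXm : ∀ i, Measurable (X i)) {B : ι → Set β}
    (hB : ∀ i, MeasurableSet (B i)) : iIndepSet (fun i => X i ⁻¹' B i) μ :=
  (iIndepSet_iff_meas_biInter fun i => hXm i (hB i)).2 fun _ =>
    hX.meas_biInter fun i _ => ⟨B i, hB i, rfl⟩

variable [Fintype ι] [DecidableEq ι] {A : ι → Set Ω}

lemma measureReal_setOf_forall_mem_iff_mem (hA : iIndepSet A μ) (hAm : ∀ i, MeasurableSet (A i))
    (T : Finset ι) :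
    μ.real {ω | ∀ i, ω ∈ A i ↔ i ∈ T}
      = (∏ i ∈ T, μ.real (A i)) * ∏ i ∈ univ \ T, (1 - μ.real (A i)) := by
  have := hA.isProbabilityMeasure
  have hset : {ω | ∀ i, ω ∈ A i ↔ i ∈ T} = ⋂ i, if i ∈ T then A i else (A i)ᶜ := by
    ext ω
    simp only [Set.mem_ofPred_eq, Set.mem_iInter]
    refine forall_congr' fun i => ?_
    split_ifs with hi <;> simp [hi]
  have hmeas : ∀ i, MeasurableSet[MeasurableSpace.generateFrom {A i}]
      (if i ∈ T then A i else (A i)ᶜ) := fun i => by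
    have hAi := MeasurableSpace.measurableSet_generateFrom (Set.mem_singleton (A i))
    by_cases hi : i ∈ T
    · simpa [hi] using hAi
    · simpa [hi] using hAi.compl
  rw [hset, measureReal_def, ((iIndepSet_iff_iIndep _ _).1 hA).meas_iInter hmeas,
    ENNReal.toReal_prod]
  simp only [← measureReal_def, apply_ite, prod_ite, measureReal_compl (hAm _), probReal_univ,
    filter_mem_eq_inter, univ_inter, filter_notMem_eq_sdiff]

variable [∀ ω, DecidablePred (ω ∈ A ·)]

lemma measureReal_le_card_le_probAtLeast (hA : iIndepSet A μ) (hAm : ∀ i, MeasurableSet (A i))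
    (k : ℕ) :
    μ.real {ω | k ≤ #{i | ω ∈ A i}} ≤ probAtLeast (fun i => μ.real (A i)) univ k := by
  have := hA.isProbabilityMeasure
  have hcover : {ω | k ≤ #{i | ω ∈ A i}}
      ⊆ ⋃ T ∈ univ.powerset.filter (k ≤ #·), {ω | ∀ i, ω ∈ A i ↔ i ∈ T} := fun ω hω =>
    Set.mem_biUnion (x := ({i | ω ∈ A i} : Finset ι))
      (mem_filter.2 ⟨mem_powerset.2 (subset_univ _), hω⟩)
      fun i => (mem_filter_univ (p := (ω ∈ A ·)) i).symm
  calc μ.real {ω | k ≤ #{i | ω ∈ A i}}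
      ≤ ∑ T ∈ univ.powerset.filter (k ≤ #·), μ.real {ω | ∀ i, ω ∈ A i ↔ i ∈ T} :=
        (measureReal_mono hcover (measure_ne_top _ _)).trans (measureReal_biUnion_finset_le _ _)
    _ = probAtLeast (fun i => μ.real (A i)) univ k := by
        simp only [sum_filter, measureReal_setOf_forall_mem_iff_mem hA hAm, probAtLeast]

theorem measure_le_card_le_ofReal_one_sub_binomCDF (hA : iIndepSet A μ)
    (hAm : ∀ i, MeasurableSet (A i)) {p : ℝ} (hp : p ≤ 1) (hAp : ∀ i, μ.real (A i) ≤ p) (k : ℕ) :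
    μ {ω | k ≤ #{i | ω ∈ A i}} ≤ ENNReal.ofReal (1 - binomCDF p (Fintype.card ι) k) := by
  have := hA.isProbabilityMeasure
  rw [← ofReal_measureReal]
  refine ENNReal.ofReal_le_ofReal ((measureReal_le_card_le_probAtLeast hA hAm k).trans ?_)
  exact probAtLeast_le_one_sub_binomCDF hp (fun i _ => ⟨measureReal_nonneg, hAp i⟩) k

end Independence

lemma card_filter_univ_eq_countP_ofFn {α : Type*} {M : ℕ} (v : Fin M → α) (p : α → Prop)
    [DecidablePred p] : #{i | p (v i)} = (List.ofFn v).countP (p ·) := by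
  induction M with
  | zero => simp
  | succ M ih =>
    rw [Fin.card_filter_univ_succ', ih (fun i => v i.succ), List.ofFn_succ, List.countP_cons,
      add_comm]
    simp

lemma sub_le_card_filter_le_of_le_orderStat {M : ℕ} (v : Fin M → ℝ) {j : ℕ} (hj0 : j ≠ 0)
    (hjM : j ≤ M) {r : ℝ} (h : r ≤ orderStat v j) : M + 1 - j ≤ #{i | r ≤ v i} := by
  set l := List.insertionSort (· ≤ ·) (List.ofFn v)
  have hlen : l.length = M := by simp [l]
  have hj : j - 1 < l.length := by omega
  have hstat : orderStat v j = l[j - 1] := List.getD_eq_getElem _ _ hj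
  have hsorted : l.Pairwise (· ≤ ·) := List.pairwise_insertionSort _ _
  have htail : ∀ x ∈ l.drop (j - 1), r ≤ x := fun x hx => by
    obtain ⟨n, hn, rfl⟩ := List.mem_iff_getElem.1 hx
    rw [List.getElem_drop]
    calc r ≤ l[j - 1] := hstat ▸ h
      _ ≤ _ := hsorted.rel_get_of_le (a := ⟨j - 1, hj⟩) (b := ⟨j - 1 + n, _⟩) (by simp)
  calc M + 1 - j = (l.drop (j - 1)).length := by rw [List.length_drop, hlen]; omega
    _ = (l.drop (j - 1)).countP (r ≤ ·) := (List.countP_eq_length.2 (by simpa using htail)).symm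
    _ ≤ l.countP (r ≤ ·) := (List.drop_sublist _ _).countP_le
    _ = #{i | r ≤ v i} := by
        rw [card_filter_univ_eq_countP_ofFn v (r ≤ ·), (List.perm_insertionSort _ _).countP_eq]

lemma StieltjesFunction.exists_isLeast_le (F : StieltjesFunction ℝ) {c : ℝ}
    (hbot : ∃ t, F t < c) (htop : ∃ t, c ≤ F t) : ∃ t₀, IsLeast {t | c ≤ F t} t₀ := by
  obtain ⟨t₁, ht₁⟩ := hbot
  have hbdd : BddBelow {t | c ≤ F t} :=
    ⟨t₁, fun t (ht : c ≤ F t) => le_of_not_ge fun hle => (ht.trans (F.mono hle)).not_gt ht₁⟩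
  refine ⟨sInf {t | c ≤ F t}, ?_, fun t ht => csInf_le hbdd ht⟩
  -- the level set is an up-set, so right-continuity at its infimum puts the infimum in it
  refine ge_of_tendsto ((F.right_continuous _).mono Set.Ioi_subset_Ici_self) ?_
  filter_upwards [self_mem_nhdsWithin] with s hs
  obtain ⟨t, ht, hts⟩ := exists_lt_of_csInf_lt htop hs
  exact le_trans (α := ℝ) ht (F.mono hts.le)

section Threshold

variable {Ω : Type*} [MeasurableSpace Ω] {μ : Measure Ω} [IsProbabilityMeasure μ] {X : Ω → ℝ}

lemma measureReal_lt_eq_one_sub_cdf_map (hX : Measurable X) (t : ℝ) :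
    μ.real {ω | t < X ω} = 1 - cdf (μ.map X) t := by
  have := Measure.isProbabilityMeasure_map (μ := μ) hX.aemeasurable
  rw [cdf_eq_real, map_measureReal_apply hX measurableSet_Iic, ← probReal_univ (μ := μ),
    ← measureReal_compl (hX measurableSet_Iic)]
  congr 1
  ext ω
  simp

lemma exists_isLeast_measureReal_lt_le (hX : Measurable X) {ε : ℝ} (hε0 : 0 < ε) (hε1 : ε < 1) :
    ∃ t₀, IsLeast {t | μ.real {ω | t < X ω} ≤ ε} t₀ := by
  simp_rw [measureReal_lt_eq_one_sub_cdf_map hX, sub_le_comm]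
  have := Measure.isProbabilityMeasure_map (μ := μ) hX.aemeasurable
  exact (cdf (μ.map X)).exists_isLeast_le
    ((tendsto_cdf_atBot _).eventually (gt_mem_nhds (by linarith))).exists
    ((tendsto_cdf_atTop _).eventually (le_mem_nhds (by linarith))).exists

lemma measureReal_le_eq_measureReal_lt {t : ℝ} (h : μ {ω | X ω = t} = 0) :
    μ.real {ω | t ≤ X ω} = μ.real {ω | t < X ω} := by
  refine le_antisymm ?_ (measureReal_mono fun ω (hω : t < X ω) => hω.le)
  calc μ.real {ω | t ≤ X ω} ≤ μ.real ({ω | t < X ω} ∪ {ω | X ω = t}) :=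
        measureReal_mono fun ω hω => (eq_or_lt_of_le hω).elim (fun h => Or.inr h.symm) Or.inl
    _ ≤ μ.real {ω | t < X ω} + μ.real {ω | X ω = t} := measureReal_union_le _ _
    _ = μ.real {ω | t < X ω} := by rw [(measureReal_eq_zero_iff).2 h, add_zero]

end Threshold

theorem stmt_15_general {Ω : Type*} [MeasurableSpace Ω] (μ : Measure Ω) [IsProbabilityMeasure μ]
    (M : ℕ) (hM : 1 ≤ M) (τ : Fin M → Ω → ℝ)
    (hmeas : ∀ i, Measurable (τ i))
    (hindep : iIndepFun τ μ)
    (hcont : ∀ i (r : ℝ), μ {ω | τ i ω = r} = 0)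
    (L : ℝ → ℝ) (hL : ∀ (i : Fin M) (t : ℝ), (μ {ω | t < τ i ω}).toReal = L t)
    (ε : ℝ) (hε0 : 0 < ε) (hε1 : ε < 1)
    (k : ℕ) (hkM : k ≤ M - 1) :
    μ {ω | L (orderStat (fun i => τ i ω) (M - k)) ≤ ε}
      ≤ ENNReal.ofReal (1 - binCDFZ M ε ((k : ℤ) - 1)) := by
  obtain ⟨t₀, ht₀, ht₀_le⟩ := exists_isLeast_measureReal_lt_le (μ := μ) (hmeas ⟨0, hM⟩) hε0 hε1
  have hA : ∀ i, μ.real {ω | t₀ ≤ τ i ω} ≤ ε := fun i =>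
    calc μ.real {ω | t₀ ≤ τ i ω} = μ.real {ω | t₀ < τ i ω} :=
          measureReal_le_eq_measureReal_lt (hcont i t₀)
      _ = μ.real {ω | t₀ < τ ⟨0, hM⟩ ω} := (hL i t₀).trans (hL ⟨0, hM⟩ t₀).symm
      _ ≤ ε := ht₀
  have hcount : {ω | L (orderStat (fun i => τ i ω) (M - k)) ≤ ε}
      ⊆ {ω | k ≤ #{i | ω ∈ {ω | t₀ ≤ τ i ω}}} := fun ω hω => by
    have := sub_le_card_filter_le_of_le_orderStat (fun i => τ i ω) (j := M - k) (by omega)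
      (by omega) (ht₀_le ((hL ⟨0, hM⟩ _).trans_le hω))
    exact (by omega : k ≤ M + 1 - (M - k)).trans this
  calc _ ≤ μ {ω | k ≤ #{i | ω ∈ {ω | t₀ ≤ τ i ω}}} := measure_mono hcount
    _ ≤ ENNReal.ofReal (1 - binomCDF ε (Fintype.card (Fin M)) k) :=
        measure_le_card_le_ofReal_one_sub_binomCDF (A := fun i => {ω | t₀ ≤ τ i ω})
          (hindep.iIndepSet_preimage hmeas fun _ => measurableSet_Ici)
          (fun i => hmeas i measurableSet_Ici) hε1.le hA k
    _ = _ := by rw [Fintype.card_fin, binCDFZ_natCast_sub_one]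

/-- Upper PAC bound: with `τ₁,…,τ_M` i.i.d. with continuous distribution (no ties a.s.),
`L(t) = P[τᵢ > t]`, `τ̃ = τ_{(M−k)}` and `k = k(M,ε,δ) ≥ 0`:
`P[L(τ̃) ≤ ε] ≤ 1 − F_{Bin(M,ε)}(k−1)`. -/
theorem stmt_15 {Ω : Type*} [MeasurableSpace Ω] (μ : Measure Ω) [IsProbabilityMeasure μ]
    (M : ℕ) (hM : 1 ≤ M) (τ : Fin M → Ω → ℝ)
    (hmeas : ∀ i, Measurable (τ i))
    (hindep : iIndepFun τ μ)
    (hident : ∀ i j, IdentDistrib (τ i) (τ j) μ μ)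
    (hcont : ∀ i (r : ℝ), μ {ω | τ i ω = r} = 0)
    (L : ℝ → ℝ) (hL : ∀ (i : Fin M) (t : ℝ), (μ {ω | t < τ i ω}).toReal = L t)
    (ε δ : ℝ) (hε0 : 0 < ε) (hε1 : ε < 1) (hδ0 : 0 < δ) (hδ1 : δ < 1)
    (k : ℕ) (hkM : k ≤ M - 1)
    (hkle : binCDFZ M ε k ≤ δ)
    (hkmax : ∀ j : ℤ, (k : ℤ) < j → j ≤ (M : ℤ) - 1 → δ < binCDFZ M ε j) :
    μ {ω | L (orderStat (fun i => τ i ω) (M - k)) ≤ ε}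
      ≤ ENNReal.ofReal (1 - binCDFZ M ε ((k : ℤ) - 1)) :=
  stmt_15_general μ M hM τ hmeas hindep hcont L hL ε hε0 hε1 k hkM
end
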